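/- Let G : ℝⁿ × ℝᵏ → ℝ be a globally simple generating function, i.e. (1) for every q ∈ ℝⁿ, the partial gradient map w ↦ ∇_w G(q,w) is a diffeomorphism of ℝᵏ, and (2) the full gradient ∇G is a diffeomorphism of ℝⁿ × ℝᵏ. Then G_T : ℝⁿ × (ℝⁿ × ℝᵏ) → ℝ defined by G_T(q,(v,w)) := ⟨q,v⟩ − G(v,w), with base variable q and fiber variables (v,w), is also a globally simple generating function: for every q the map (v,w) ↦ ∇_{(v,w)} G_T(q,(v,w)) is a diffeomorphism of ℝⁿ × ℝᵏ, and ∇G_T is a diffeomorphism of ℝⁿ × ℝⁿ × ℝᵏ. -/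

import Mathlib

/-!
The fibre gradient of `G_T` at `q` is `(v, w) ↦ (q - ∇_v G, -∇_w G)`, i.e. `∇G` followed by an
affine involution. The full gradient is `(q, v, w) ↦ (v, q - ∇_v G(v, w), -∇_w G(v, w))`, with
inverse `(a, c, b) ↦ (c + ∇_v G(a, w), a, w)`, where `w` solves `∇_w G(a, w) = -b`. This `w`
depends smoothly on `(a, b)` by the inverse function theorem applied to the bijection
`(v, w) ↦ (v, ∇_w G(v, w))`, whose derivative is block-triangular with invertible diagonal blocks.
-/

noncomputable section

/-- g : X → X is a diffeomorphism: a smooth bijection with smooth inverse. -/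
def IsDiffeo {X : Type*} [NormedAddCommGroup X] [NormedSpace ℝ X] (g : X → X) : Prop :=
  ∃ e : X ≃ X, ⇑e = g ∧ ContDiff ℝ (⊤ : ℕ∞) ⇑e ∧ ContDiff ℝ (⊤ : ℕ∞) ⇑e.symm

open InnerProductSpace ContinuousLinearMap

theorem Equiv.contDiff_symm_of_hasFDerivAt {𝕂 : Type*} [RCLike 𝕂] {E F : Type*}
    [NormedAddCommGroup E] [NormedSpace 𝕂 E] [CompleteSpace E]
    [NormedAddCommGroup F] [NormedSpace 𝕂 F] {n : WithTop ℕ∞}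
    (e : E ≃ F) {e' : E → E ≃L[𝕂] F} (he' : ∀ x, HasFDerivAt e (e' x : E →L[𝕂] F) x)
    (he : ContDiff 𝕂 n e) (hn : n ≠ 0) : ContDiff 𝕂 n e.symm := by
  refine contDiff_iff_contDiffAt.2 fun y => ?_
  have hx := he.contDiffAt (x := e.symm y)
  have hinv := hx.to_localInverse (he' _) hn
  have hright := (hx.hasStrictFDerivAt' (he' _) hn).eventually_right_inverse
  rw [e.apply_symm_apply] at hinv hright
  refine hinv.congr_of_eventuallyEq ?_
  filter_upwards [hright] with z hz
  exact e.symm_apply_eq.2 hz.symm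

namespace IsDiffeo

variable {X : Type*} [NormedAddCommGroup X] [NormedSpace ℝ X] {f g : X → X}

theorem contDiff (hf : IsDiffeo f) : ContDiff ℝ (⊤ : ℕ∞) f := by
  obtain ⟨e, rfl, he, -⟩ := hf
  exact he

theorem of_inverse (hf : ContDiff ℝ (⊤ : ℕ∞) f) (hg : ContDiff ℝ (⊤ : ℕ∞) g)
    (hl : Function.LeftInverse g f) (hr : Function.RightInverse g f) : IsDiffeo f :=
  ⟨⟨f, g, hl, hr⟩, rfl, hf, hg⟩

theorem of_involutive (hf : ContDiff ℝ (⊤ : ℕ∞) f) (h : Function.Involutive f) : IsDiffeo f :=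
  of_inverse hf hf h h

theorem comp (hf : IsDiffeo f) (hg : IsDiffeo g) : IsDiffeo (f ∘ g) := by
  obtain ⟨e, rfl, he, he'⟩ := hf
  obtain ⟨e', rfl, hg, hg'⟩ := hg
  exact ⟨e'.trans e, rfl, he.comp hg, hg'.comp he'⟩

theorem exists_hasFDerivAt_equiv (hf : IsDiffeo f) (x : X) :
    ∃ L : X ≃L[ℝ] X, HasFDerivAt f (L : X →L[ℝ] X) x := by
  obtain ⟨e, rfl, he, he'⟩ := hf
  have hD := (he.differentiable (by simp)).differentiableAt.hasFDerivAt (x := x)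
  have hD' := (he'.differentiable (by simp)).differentiableAt.hasFDerivAt (x := e x)
  have hleft : (fderiv ℝ e.symm (e x)).comp (fderiv ℝ e x) = .id ℝ X := by
    have h := hD'.comp x hD
    rw [e.symm_comp_self] at h
    exact h.unique (hasFDerivAt_id x)
  have hright : (fderiv ℝ e x).comp (fderiv ℝ e.symm (e x)) = .id ℝ X := by
    have h := ((he.differentiable (by simp)).differentiableAt.hasFDerivAt).comp (e x) hD'
    rw [e.self_comp_symm, e.symm_apply_apply] at h
    exact h.unique (hasFDerivAt_id (e x))
  exact ⟨.equivOfInverse' _ _ hright hleft, hD⟩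

end IsDiffeo

theorem exists_hasFDerivAt_prodShear_equiv {X Y : Type*} [NormedAddCommGroup X]
    [NormedSpace ℝ X] [NormedAddCommGroup Y] [NormedSpace ℝ Y] {f : X × Y → Y} {x : X} {y : Y}
    (hf : DifferentiableAt ℝ f (x, y)) {B : Y ≃L[ℝ] Y}
    (hB : HasFDerivAt (fun y' => f (x, y')) (B : Y →L[ℝ] Y) y) :
    ∃ L : (X × Y) ≃L[ℝ] X × Y,
      HasFDerivAt (fun p : X × Y => (p.1, f p)) (L : X × Y →L[ℝ] X × Y) (x, y) := by
  set D := fderiv ℝ f (x, y)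
  have hDB : D ∘L inr ℝ X Y = B :=
    (hf.hasFDerivAt.comp y (hasFDerivAt_prodMk_right x y)).unique hB
  let L := (ContinuousLinearEquiv.refl ℝ X).skewProd B (D ∘L inl ℝ X Y)
  have hL : (L : X × Y →L[ℝ] X × Y) = (fst ℝ X Y).prod D := by
    refine ContinuousLinearMap.ext fun p => Prod.ext rfl ?_
    show B p.2 + D (p.1, 0) = D p
    have hBp : B p.2 = D (0, p.2) := by rw [← ContinuousLinearEquiv.coe_coe, ← hDB]; rfl
    rw [hBp, ← map_add]
    simp
  exact ⟨L, hL ▸ hasFDerivAt_fst.prodMk hf.hasFDerivAt⟩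

section Shear

variable {X Y : Type*} [NormedAddCommGroup X] [NormedSpace ℝ X] [CompleteSpace X]
  [NormedAddCommGroup Y] [NormedSpace ℝ Y] [CompleteSpace Y]

theorem isDiffeo_prodShear {f : X × Y → Y} (hf : ContDiff ℝ (⊤ : ℕ∞) f)
    (hfib : ∀ x, IsDiffeo fun y => f (x, y)) :
    IsDiffeo fun p : X × Y => (p.1, f p) := by
  have hD : ∀ p : X × Y, ∃ L : (X × Y) ≃L[ℝ] X × Y,
      HasFDerivAt (fun p : X × Y => (p.1, f p)) (L : X × Y →L[ℝ] X × Y) p := by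
    rintro ⟨x, y⟩
    obtain ⟨B, hB⟩ := (hfib x).exists_hasFDerivAt_equiv y
    exact exists_hasFDerivAt_prodShear_equiv (hf.differentiable (by simp)).differentiableAt hB
  choose L hL using hD
  choose e he _ _ using hfib
  let M : X × Y ≃ X × Y := (Equiv.refl X).prodShear e
  have hM : ⇑M = fun p : X × Y => (p.1, f p) := by
    funext p
    simp [M, he]
  have hMs : ContDiff ℝ (⊤ : ℕ∞) M := hM ▸ contDiff_fst.prodMk hf
  exact ⟨M, hM, hMs, M.contDiff_symm_of_hasFDerivAt (hM ▸ hL) hMs (by simp)⟩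

theorem isDiffeo_swap_sub_neg_of_fiberwise {Φ : X × Y → X × Y} (hΦ : ContDiff ℝ (⊤ : ℕ∞) Φ)
    (hfib : ∀ v, IsDiffeo fun w => (Φ (v, w)).2) :
    IsDiffeo fun x : X × X × Y => (x.2.1, x.1 - (Φ x.2).1, -(Φ x.2).2) := by
  obtain ⟨M, hM, -, hMs'⟩ := isDiffeo_prodShear (f := fun p => (Φ p).2)
    (contDiff_snd.comp hΦ) hfib
  have hM_apply_symm : ∀ p, ((M.symm p).1, (Φ (M.symm p)).2) = p := fun p => by
    simpa only [hM] using M.apply_symm_apply p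
  have hM_symm_apply : ∀ v w, M.symm (v, (Φ (v, w)).2) = (v, w) := fun v w => by
    simpa [hM] using M.symm_apply_apply (v, w)
  refine IsDiffeo.of_inverse
    (g := fun y => (y.2.1 + (Φ (M.symm (y.1, -y.2.2))).1, M.symm (y.1, -y.2.2))) ?_ ?_ ?_ ?_
  · fun_prop
  · fun_prop
  · rintro ⟨q, v, w⟩
    simp [hM_symm_apply]
  · rintro ⟨a, c, b⟩
    obtain ⟨h₁, h₂⟩ := Prod.mk_inj.1 (hM_apply_symm (a, -b))
    simp [h₁, h₂]

end Shear

section Gradient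

variable {F : Type*} [NormedAddCommGroup F] [InnerProductSpace ℝ F] [CompleteSpace F]

theorem HasGradientAt.sub {f g : F → ℝ} {f' g' x : F} (hf : HasGradientAt f f' x)
    (hg : HasGradientAt g g' x) : HasGradientAt (fun y => f y - g y) (f' - g') x := by
  rw [hasGradientAt_iff_hasFDerivAt, map_sub]
  exact hf.hasFDerivAt.sub hg.hasFDerivAt

theorem hasGradientAt_inner_const_left (q x : F) : HasGradientAt (fun y => inner ℝ q y) q x := by
  rw [hasGradientAt_iff_hasFDerivAt]
  exact (toDual ℝ F q).hasFDerivAt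

theorem hasGradientAt_inner_const_right (v x : F) : HasGradientAt (fun y => inner ℝ y v) v x := by
  simpa only [real_inner_comm v] using hasGradientAt_inner_const_left v x

end Gradient

/-- Let G : ℝⁿ × ℝᵏ → ℝ be a globally simple generating function:
(1) for every q, w ↦ ∇_w G(q,w) is a diffeomorphism of ℝᵏ, and
(2) the full gradient ∇G = (∇_q G, ∇_w G) is a diffeomorphism of ℝⁿ × ℝᵏ.
Then G_T(q,(v,w)) = ⟨q,v⟩ − G(v,w), with base variable q and fiber variables (v,w), is
also globally simple: for every q the fiber gradient map
(v,w) ↦ ∇_{(v,w)} G_T(q,(v,w)) is a diffeomorphism of ℝⁿ × ℝᵏ, and the full gradient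
∇G_T is a diffeomorphism of ℝⁿ × ℝⁿ × ℝᵏ. -/
theorem stmt17 (n k : ℕ)
    (G : EuclideanSpace ℝ (Fin n) × EuclideanSpace ℝ (Fin k) → ℝ)
    (hG : ContDiff ℝ (⊤ : ℕ∞) G)
    (hfib : ∀ q, IsDiffeo (fun w => gradient (fun w' => G (q, w')) w))
    (hfull : IsDiffeo (fun x : EuclideanSpace ℝ (Fin n) × EuclideanSpace ℝ (Fin k) =>
      (gradient (fun q' => G (q', x.2)) x.1, gradient (fun w' => G (x.1, w')) x.2))) :
    (∀ q, IsDiffeo (fun x : EuclideanSpace ℝ (Fin n) × EuclideanSpace ℝ (Fin k) =>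
      (gradient (fun v' => (inner ℝ q v' : ℝ) - G (v', x.2)) x.1,
       gradient (fun w' => (inner ℝ q x.1 : ℝ) - G (x.1, w')) x.2))) ∧
    IsDiffeo (fun x : EuclideanSpace ℝ (Fin n) ×
        EuclideanSpace ℝ (Fin n) × EuclideanSpace ℝ (Fin k) =>
      (gradient (fun q' => (inner ℝ q' x.2.1 : ℝ) - G (x.2.1, x.2.2)) x.1,
       gradient (fun v' => (inner ℝ x.1 v' : ℝ) - G (v', x.2.2)) x.2.1,
       gradient (fun w' => (inner ℝ x.1 x.2.1 : ℝ) - G (x.2.1, w')) x.2.2)) := by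
  have hG₁ : ∀ v w, HasGradientAt (fun v' => G (v', w)) (gradient (fun v' => G (v', w)) v) v :=
    fun v w => ((hG.comp (contDiff_prodMk_left w)).differentiable (by simp)).differentiableAt
      |>.hasGradientAt
  have hG₂ : ∀ v w, HasGradientAt (fun w' => G (v, w')) (gradient (fun w' => G (v, w')) w) w :=
    fun v w => ((hG.comp (contDiff_prodMk_right v)).differentiable (by simp)).differentiableAt
      |>.hasGradientAt
  refine ⟨fun q => ?_, ?_⟩
  · have hA : IsDiffeo fun p : EuclideanSpace ℝ (Fin n) × EuclideanSpace ℝ (Fin k) =>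
        (q - p.1, -p.2) :=
      .of_involutive (by fun_prop) fun p => by simp
    convert hA.comp hfull using 2 with x
    rw [((hasGradientAt_inner_const_left q x.1).sub (hG₁ _ _)).gradient,
      ((hasGradientAt_const _ _).sub (hG₂ _ _)).gradient, zero_sub]
    rfl
  · convert isDiffeo_swap_sub_neg_of_fiberwise hfull.contDiff hfib using 2 with x
    rw [((hasGradientAt_inner_const_right _ _).sub (hasGradientAt_const _ _)).gradient,
      ((hasGradientAt_inner_const_left _ _).sub (hG₁ _ _)).gradient,
      ((hasGradientAt_const _ _).sub (hG₂ _ _)).gradient, zero_sub, sub_zero]
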